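/- arXiv:0705.1276 — 4 statements merged into one kernel-verified Lean document; each statement's English description precedes it below -/
import Mathlib

section
/- Let q > 1 be a real number. For any bipartite quantum state ρ (a positive semidefinite matrix with trace 1) on a finite-dimensional bipartite Hilbert space ℂ^{d₁} ⊗ ℂ^{d₂} (i.e., a positive semidefinite matrix indexed by (Fin d₁ × Fin d₂) with trace 1), the inequality 1 + ‖ρ‖_q ≥ ‖Tr₁ρ‖_q + ‖Tr₂ρ‖_q holds. -/
/-!
Audenaert's duality argument. Let `p` be the conjugate exponent of `q`. The `q`-norm of a positive
semidefinite `σ` is attained as `Tr(σ A)` for some `A = V diag(a) Vᴴ` with `0 ≤ a ≤ 1` and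
`‖a‖_p ≤ 1` (take `V` an eigenbasis of `σ` and `a` the Hölder dual of its spectrum). Choose such
`A` for `Tr₁ρ` and `B` for `Tr₂ρ`. Positivity of `(1 - B) ⊗ (1 - A)` gives
`Tr ρ(1 ⊗ A) + Tr ρ(B ⊗ 1) ≤ Tr ρ + Tr ρ(B ⊗ A)`, and `Tr ρ(B ⊗ A) ≤ ‖ρ‖_q` by Hölder, since
`B ⊗ A` again has eigenvalues in `[0, 1]` of `p`-norm at most one. Both trace inequalities reduce to
scalar ones through `Tr(U diag(λ) Uᴴ · V diag(μ) Vᴴ) = ∑ λ_i μ_j |(UᴴV)_ij|²`, where the matrix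
`|(UᴴV)_ij|²` is doubly stochastic.
-/

open Matrix ComplexOrder

/-- `Tr[A^q]` for a Hermitian matrix `A`, where `A^q` is the matrix power obtained by raising
each eigenvalue of `A` to the (real) power `q`; defined as `0` if `A` is not Hermitian. -/
noncomputable def traceRpow {d : Type*} [Fintype d] [DecidableEq d]
    (q : ℝ) (A : Matrix d d ℂ) : ℝ :=
  if hA : A.IsHermitian then ∑ i, hA.eigenvalues i ^ q else 0

/-- The Schatten `q`-norm `‖A‖_q = (Tr[A^q])^{1/q}` of a positive semidefinite matrix `A`. -/
noncomputable def schattenNorm {d : Type*} [Fintype d] [DecidableEq d]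
    (q : ℝ) (A : Matrix d d ℂ) : ℝ :=
  traceRpow q A ^ (1 / q)

/-- The partial trace over the first tensor factor: `(Tr₁ρ)(j,j') = ∑ i, ρ((i,j),(i,j'))`. -/
noncomputable def ptrace1 {d₁ d₂ : ℕ}
    (ρ : Matrix (Fin d₁ × Fin d₂) (Fin d₁ × Fin d₂) ℂ) : Matrix (Fin d₂) (Fin d₂) ℂ :=
  Matrix.of fun j j' => ∑ i, ρ (i, j) (i, j')

/-- The partial trace over the second tensor factor: `(Tr₂ρ)(i,i') = ∑ j, ρ((i,j),(i',j'))`. -/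
noncomputable def ptrace2 {d₁ d₂ : ℕ}
    (ρ : Matrix (Fin d₁ × Fin d₂) (Fin d₁ × Fin d₂) ℂ) : Matrix (Fin d₁) (Fin d₁) ℂ :=
  Matrix.of fun i i' => ∑ j, ρ (i, j) (i', j)

open scoped Kronecker

section Scalar
variable {n : Type*} [Fintype n]

lemma sum_mul_mul_le_of_mem_doublyStochastic [DecidableEq n] {p q : ℝ}
    (hpq : p.HolderConjugate q) {w : Matrix n n ℝ} (hw : w ∈ doublyStochastic ℝ n) {f g : n → ℝ}
    (hf : 0 ≤ f) (hg : 0 ≤ g) :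
    ∑ i, ∑ j, f i * g j * w i j ≤ (∑ i, f i ^ p) ^ (1 / p) * (∑ j, g j ^ q) ^ (1 / q) := by
  rw [mem_doublyStochastic_iff_sum] at hw
  obtain ⟨hw0, hrow, hcol⟩ := hw
  have split : ∀ i j, w i j = w i j ^ p⁻¹ * w i j ^ q⁻¹ := fun i j => by
    rw [← Real.rpow_add' (hw0 i j) (by rw [hpq.inv_add_inv_eq_one]; norm_num),
      hpq.inv_add_inv_eq_one, Real.rpow_one]
  have holder := Real.inner_le_Lp_mul_Lq_of_nonneg Finset.univ hpq
    (f := fun x : n × n => f x.1 * w x.1 x.2 ^ p⁻¹) (g := fun x => g x.2 * w x.1 x.2 ^ q⁻¹)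
    (fun x _ => mul_nonneg (hf _) (Real.rpow_nonneg (hw0 _ _) _))
    (fun x _ => mul_nonneg (hg _) (Real.rpow_nonneg (hw0 _ _) _))
  simp only [Real.mul_rpow (hf _) (Real.rpow_nonneg (hw0 _ _) _),
    Real.mul_rpow (hg _) (Real.rpow_nonneg (hw0 _ _) _),
    Real.rpow_inv_rpow (hw0 _ _) hpq.ne_zero, Real.rpow_inv_rpow (hw0 _ _) hpq.symm.ne_zero,
    Fintype.sum_prod_type] at holder
  rw [Finset.sum_comm (f := fun i j => g j ^ q * w i j)] at holder
  simp only [← Finset.mul_sum, hrow, hcol, mul_one] at holder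
  convert holder using 3 with i _ j
  conv_lhs => rw [split i j]
  ring

lemma exists_sum_mul_eq_Lp_norm {p q : ℝ} (hpq : p.HolderConjugate q) {f : n → ℝ} (hf : 0 ≤ f) :
    ∃ g : n → ℝ, 0 ≤ g ∧ g ≤ 1 ∧ ∑ i, g i ^ q ≤ 1 ∧ ∑ i, f i * g i = (∑ i, f i ^ p) ^ (1 / p) := by
  lift f to n → NNReal using hf
  obtain ⟨g, hgq, hfg⟩ := (NNReal.isGreatest_Lp Finset.univ f hpq).1
  have hgq : ∑ i, g i ^ q ≤ 1 := hgq
  have hfg : ∑ i, f i * g i = (∑ i, f i ^ p) ^ (1 / p) := hfg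
  refine ⟨fun i => g i, fun i => (g i).2, fun i => ?_, ?_, ?_⟩ <;> beta_reduce
  · have : g i ^ q ≤ 1 := (Finset.single_le_sum (fun j _ => zero_le) (Finset.mem_univ i)).trans hgq
    rw [← NNReal.one_rpow q, NNReal.rpow_le_rpow_iff hpq.symm.pos] at this
    exact_mod_cast this
  · exact_mod_cast hgq
  · exact_mod_cast hfg

lemma sum_rpow_mul_le_one {m : Type*} [Fintype m] {p : ℝ} {a : n → ℝ} {b : m → ℝ} (ha : 0 ≤ a)
    (hb : 0 ≤ b) (hap : ∑ i, a i ^ p ≤ 1) (hbp : ∑ j, b j ^ p ≤ 1) :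
    ∑ x : n × m, (a x.1 * b x.2) ^ p ≤ 1 := by
  simp_rw [Real.mul_rpow (ha _) (hb _), Fintype.sum_prod_type, ← Finset.mul_sum, ← Finset.sum_mul]
  exact mul_le_one₀ hap (Finset.sum_nonneg fun j _ => Real.rpow_nonneg (hb j) _) hbp

end Scalar

section Spectral
variable {n m : Type*} [Fintype n] [DecidableEq n] [Fintype m] [DecidableEq m]

def conjDiagonal (V : Matrix n n ℂ) (μ : n → ℝ) : Matrix n n ℂ :=
  V * diagonal (fun i => (μ i : ℂ)) * Vᴴ

lemma Matrix.IsHermitian.conjDiagonal_eigenvalues {A : Matrix n n ℂ} (hA : A.IsHermitian) :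
    conjDiagonal hA.eigenvectorUnitary hA.eigenvalues = A := by
  conv_rhs => rw [hA.spectral_theorem, Unitary.conjStarAlgAut_apply]
  rfl

lemma trace_conjDiagonal_mul_conjDiagonal (U V : Matrix n n ℂ) (l μ : n → ℝ) :
    (conjDiagonal U l * conjDiagonal V μ).trace
      = ((∑ i, ∑ j, l i * μ j * Complex.normSq ((Uᴴ * V) i j) : ℝ) : ℂ) := by
  have cycle : (conjDiagonal U l * conjDiagonal V μ).trace
      = (diagonal (fun i => (l i : ℂ)) * (Uᴴ * V) * diagonal (fun j => (μ j : ℂ))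
          * (Uᴴ * V)ᴴ).trace := by
    rw [conjTranspose_mul, conjTranspose_conjTranspose, conjDiagonal, conjDiagonal]
    simp only [Matrix.mul_assoc]
    rw [trace_mul_comm]
    simp only [Matrix.mul_assoc]
  rw [cycle]
  generalize Uᴴ * V = W
  push_cast
  refine Finset.sum_congr rfl fun i _ => ?_
  rw [diag_apply, mul_apply]
  refine Finset.sum_congr rfl fun j _ => ?_
  rw [mul_diagonal, diagonal_mul, conjTranspose_apply, Complex.normSq_eq_conj_mul_self,
    Complex.star_def]
  ring

lemma conjDiagonal_kronecker_conjDiagonal (U : Matrix n n ℂ) (V : Matrix m m ℂ) (a : n → ℝ)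
    (b : m → ℝ) :
    conjDiagonal U a ⊗ₖ conjDiagonal V b = conjDiagonal (U ⊗ₖ V) (fun x => a x.1 * b x.2) := by
  simp only [conjDiagonal, conjTranspose_kronecker, mul_kronecker_mul, diagonal_kronecker_diagonal,
    Complex.ofReal_mul]

lemma one_sub_conjDiagonal {V : Matrix n n ℂ} (hV : V ∈ unitaryGroup n ℂ) (μ : n → ℝ) :
    1 - conjDiagonal V μ = conjDiagonal V (1 - μ) := by
  have hdiag : diagonal (fun i => ((1 - μ) i : ℂ)) = 1 - diagonal (fun i => (μ i : ℂ)) := by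
    rw [← diagonal_one, diagonal_sub]
    simp
  rw [conjDiagonal, conjDiagonal, hdiag, Matrix.mul_sub, Matrix.sub_mul, Matrix.mul_one,
    ← star_eq_conjTranspose, mem_unitaryGroup_iff.mp hV]

lemma map_normSq_mem_doublyStochastic {W : Matrix n n ℂ} (hW : W ∈ unitaryGroup n ℂ) :
    W.map Complex.normSq ∈ doublyStochastic ℝ n := by
  rw [mem_doublyStochastic_iff_sum]
  refine ⟨fun i j => Complex.normSq_nonneg _, fun i => ?_, fun j => ?_⟩
  · have := congr_fun₂ (mem_unitaryGroup_iff.mp hW) i i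
    simp only [mul_apply, star_apply, one_apply_eq, Complex.star_def, Complex.mul_conj] at this
    exact_mod_cast this
  · have := congr_fun₂ (mem_unitaryGroup_iff'.mp hW) j j
    simp only [mul_apply, star_apply, one_apply_eq, Complex.star_def, Complex.conj_mul'] at this
    simp only [map_apply, Complex.normSq_eq_norm_sq]
    exact_mod_cast this

lemma Matrix.IsHermitian.schattenNorm_eq {A : Matrix n n ℂ} (hA : A.IsHermitian) (q : ℝ) :
    schattenNorm q A = (∑ i, hA.eigenvalues i ^ q) ^ (1 / q) := by
  rw [schattenNorm, traceRpow, dif_pos hA]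

lemma Matrix.IsHermitian.trace_mul_conjDiagonal {A : Matrix n n ℂ} (hA : A.IsHermitian)
    (V : Matrix n n ℂ) (μ : n → ℝ) :
    (A * conjDiagonal V μ).trace = ((∑ i, ∑ j, hA.eigenvalues i * μ j *
      Complex.normSq (((hA.eigenvectorUnitary : Matrix n n ℂ)ᴴ * V) i j) : ℝ) : ℂ) := by
  calc (A * conjDiagonal V μ).trace
      = (conjDiagonal hA.eigenvectorUnitary hA.eigenvalues * conjDiagonal V μ).trace := by
        rw [hA.conjDiagonal_eigenvalues]
    _ = _ := trace_conjDiagonal_mul_conjDiagonal _ _ _ _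

lemma Matrix.PosSemidef.re_trace_mul_conjDiagonal_nonneg {A : Matrix n n ℂ} (hA : A.PosSemidef)
    (V : Matrix n n ℂ) {μ : n → ℝ} (hμ : 0 ≤ μ) : 0 ≤ (A * conjDiagonal V μ).trace.re := by
  rw [hA.1.trace_mul_conjDiagonal, Complex.ofReal_re]
  exact Finset.sum_nonneg fun i _ => Finset.sum_nonneg fun j _ =>
    mul_nonneg (mul_nonneg (hA.eigenvalues_nonneg i) (hμ j)) (Complex.normSq_nonneg _)

lemma Matrix.PosSemidef.re_trace_mul_conjDiagonal_le_schattenNorm {A : Matrix n n ℂ}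
    (hA : A.PosSemidef) {p q : ℝ} (hqp : q.HolderConjugate p) {V : Matrix n n ℂ}
    (hV : V ∈ unitaryGroup n ℂ) {μ : n → ℝ} (hμ : 0 ≤ μ) (hμp : ∑ j, μ j ^ p ≤ 1) :
    (A * conjDiagonal V μ).trace.re ≤ schattenNorm q A := by
  have hW : (hA.1.eigenvectorUnitary : Matrix n n ℂ)ᴴ * V ∈ unitaryGroup n ℂ :=
    mul_mem (Unitary.star_mem hA.1.eigenvectorUnitary.2) hV
  rw [hA.1.trace_mul_conjDiagonal, Complex.ofReal_re, hA.1.schattenNorm_eq q]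
  calc _ ≤ (∑ i, hA.1.eigenvalues i ^ q) ^ (1 / q) * (∑ j, μ j ^ p) ^ (1 / p) :=
        sum_mul_mul_le_of_mem_doublyStochastic hqp (map_normSq_mem_doublyStochastic hW)
          hA.eigenvalues_nonneg hμ
    _ ≤ (∑ i, hA.1.eigenvalues i ^ q) ^ (1 / q) :=
        mul_le_of_le_one_right (Real.rpow_nonneg
            (Finset.sum_nonneg fun i _ => Real.rpow_nonneg (hA.eigenvalues_nonneg i) _) _)
          (Real.rpow_le_one (Finset.sum_nonneg fun j _ => Real.rpow_nonneg (hμ j) _) hμp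
            (one_div_nonneg.2 hqp.symm.nonneg))

lemma Matrix.PosSemidef.exists_conjDiagonal_re_trace_mul_eq_schattenNorm {A : Matrix n n ℂ}
    (hA : A.PosSemidef) {p q : ℝ} (hqp : q.HolderConjugate p) :
    ∃ V ∈ unitaryGroup n ℂ, ∃ a : n → ℝ, 0 ≤ a ∧ a ≤ 1 ∧ ∑ i, a i ^ p ≤ 1 ∧
      (A * conjDiagonal V a).trace.re = schattenNorm q A := by
  obtain ⟨a, ha0, ha1, hap, ha⟩ := exists_sum_mul_eq_Lp_norm hqp hA.eigenvalues_nonneg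
  refine ⟨_, hA.1.eigenvectorUnitary.2, a, ha0, ha1, hap, ?_⟩
  rw [hA.1.trace_mul_conjDiagonal, Complex.ofReal_re, hA.1.schattenNorm_eq q, ← ha,
    ← star_eq_conjTranspose, Unitary.coe_star_mul_self]
  refine Finset.sum_congr rfl fun i _ => ?_
  rw [Finset.sum_eq_single i (fun j _ hji => by simp [one_apply_ne' hji]) (by simp)]
  simp

end Spectral

lemma one_sub_kronecker_one_sub {l m R : Type*} [DecidableEq l] [DecidableEq m] [CommRing R]
    (B : Matrix l l R) (A : Matrix m m R) :
    (1 - B) ⊗ₖ (1 - A) = 1 - 1 ⊗ₖ A - B ⊗ₖ 1 + B ⊗ₖ A := by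
  rw [← one_kronecker_one]
  ext ⟨i, j⟩ ⟨i', j'⟩
  simp only [kronecker_apply, Matrix.sub_apply, Matrix.add_apply]
  ring

section PartialTrace
variable {d₁ d₂ : ℕ}

lemma ptrace1_eq_sum_submatrix (ρ : Matrix (Fin d₁ × Fin d₂) (Fin d₁ × Fin d₂) ℂ) :
    ptrace1 ρ = ∑ i, ρ.submatrix (Prod.mk i) (Prod.mk i) := by
  ext j j'
  simp [ptrace1, Matrix.sum_apply]

lemma ptrace2_eq_sum_submatrix (ρ : Matrix (Fin d₁ × Fin d₂) (Fin d₁ × Fin d₂) ℂ) :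
    ptrace2 ρ = ∑ j, ρ.submatrix (fun i => (i, j)) (fun i => (i, j)) := by
  ext i i'
  simp [ptrace2, Matrix.sum_apply]

lemma Matrix.PosSemidef.ptrace1 {ρ : Matrix (Fin d₁ × Fin d₂) (Fin d₁ × Fin d₂) ℂ}
    (hρ : ρ.PosSemidef) : (ptrace1 ρ).PosSemidef := by
  rw [ptrace1_eq_sum_submatrix]
  exact posSemidef_sum _ fun i _ => hρ.submatrix _

lemma Matrix.PosSemidef.ptrace2 {ρ : Matrix (Fin d₁ × Fin d₂) (Fin d₁ × Fin d₂) ℂ}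
    (hρ : ρ.PosSemidef) : (ptrace2 ρ).PosSemidef := by
  rw [ptrace2_eq_sum_submatrix]
  exact posSemidef_sum _ fun j _ => hρ.submatrix _

lemma trace_mul_one_kronecker (ρ : Matrix (Fin d₁ × Fin d₂) (Fin d₁ × Fin d₂) ℂ)
    (A : Matrix (Fin d₂) (Fin d₂) ℂ) :
    (ρ * ((1 : Matrix (Fin d₁) (Fin d₁) ℂ) ⊗ₖ A)).trace = (ptrace1 ρ * A).trace := by
  simp only [trace, diag_apply, mul_apply, kroneckerMap_apply, ptrace1, of_apply,
    Fintype.sum_prod_type, one_apply]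
  simp only [ite_mul, one_mul, zero_mul, mul_ite, mul_zero, Finset.sum_ite_irrel,
    Finset.sum_const_zero, Finset.sum_ite_eq', Finset.mem_univ, if_true, Finset.sum_mul]
  exact Finset.sum_comm.trans (Finset.sum_congr rfl fun _ _ => Finset.sum_comm)

lemma trace_mul_kronecker_one (ρ : Matrix (Fin d₁ × Fin d₂) (Fin d₁ × Fin d₂) ℂ)
    (B : Matrix (Fin d₁) (Fin d₁) ℂ) :
    (ρ * (B ⊗ₖ (1 : Matrix (Fin d₂) (Fin d₂) ℂ))).trace = (ptrace2 ρ * B).trace := by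
  simp only [trace, diag_apply, mul_apply, kroneckerMap_apply, ptrace2, of_apply,
    Fintype.sum_prod_type, one_apply]
  simp only [mul_ite, mul_one, mul_zero, Finset.sum_ite_eq', Finset.mem_univ, if_true,
    Finset.sum_mul]
  exact Finset.sum_congr rfl fun _ _ => Finset.sum_comm

end PartialTrace

/-- **Theorem 1 (Audenaert).** For `q > 1` and any bipartite state `ρ` on `ℂ^{d₁} ⊗ ℂ^{d₂}`,
`1 + ‖ρ‖_q ≥ ‖Tr₁ρ‖_q + ‖Tr₂ρ‖_q`. -/
theorem schattenNorm_partial_traces_le {d₁ d₂ : ℕ} (q : ℝ) (hq : 1 < q)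
    (ρ : Matrix (Fin d₁ × Fin d₂) (Fin d₁ × Fin d₂) ℂ)
    (hρ : ρ.PosSemidef) (htr : ρ.trace = 1) :
    schattenNorm q (ptrace1 ρ) + schattenNorm q (ptrace2 ρ) ≤ 1 + schattenNorm q ρ := by
  have hqp := Real.HolderConjugate.conjExponent hq
  obtain ⟨V₁, hV₁, a, ha0, ha1, hap, hσ₁⟩ :=
    hρ.ptrace1.exists_conjDiagonal_re_trace_mul_eq_schattenNorm hqp
  obtain ⟨V₂, hV₂, b, hb0, hb1, hbp, hσ₂⟩ :=
    hρ.ptrace2.exists_conjDiagonal_re_trace_mul_eq_schattenNorm hqp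
  set A := conjDiagonal V₁ a
  set B := conjDiagonal V₂ b
  have hcross : (ρ * (B ⊗ₖ A)).trace.re ≤ schattenNorm q ρ := by
    rw [conjDiagonal_kronecker_conjDiagonal]
    exact hρ.re_trace_mul_conjDiagonal_le_schattenNorm hqp (kronecker_mem_unitary hV₂ hV₁)
      (fun x => mul_nonneg (hb0 x.1) (ha0 x.2)) (sum_rpow_mul_le_one hb0 ha0 hbp hap)
  have hpos : 0 ≤ (ρ * ((1 - B) ⊗ₖ (1 - A))).trace.re := by
    rw [one_sub_conjDiagonal hV₂, one_sub_conjDiagonal hV₁, conjDiagonal_kronecker_conjDiagonal]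
    exact hρ.re_trace_mul_conjDiagonal_nonneg _
      fun x => mul_nonneg (sub_nonneg.2 (hb1 x.1)) (sub_nonneg.2 (ha1 x.2))
  rw [one_sub_kronecker_one_sub, Matrix.mul_add, Matrix.mul_sub, Matrix.mul_sub, Matrix.mul_one,
    trace_add, trace_sub, trace_sub, htr, trace_mul_one_kronecker, trace_mul_kronecker_one] at hpos
  simp only [Complex.add_re, Complex.sub_re, Complex.one_re] at hpos
  linarith
end

section
/- Let q > 1 be a real number. Let X and Y be positive semidefinite matrices (of finite sizes d₁ and d₂ respectively) with ‖X‖_q = ‖Y‖_q = 1. Then ‖(X ⊗ 𝟙 + 𝟙 ⊗ Y − 𝟙)₊‖_q ≤ 1, where X ⊗ 𝟙 and 𝟙 ⊗ Y denote Kronecker products with identity matrices of the appropriate sizes and 𝟙 on its own denotes the identity matrix of size d₁·d₂. -/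
open Matrix ComplexOrder Kronecker

/-- The positive part `A₊` of a Hermitian matrix `A`: each eigenvalue `λ` of `A` is replaced
by `max 0 λ` in a spectral decomposition; defined as `0` if `A` is not Hermitian. -/
noncomputable def posPartMat {d : Type*} [Fintype d] [DecidableEq d]
    (A : Matrix d d ℂ) : Matrix d d ℂ :=
  if hA : A.IsHermitian then
    (hA.eigenvectorUnitary : Matrix d d ℂ) *
      Matrix.diagonal (Complex.ofReal ∘ fun i => max 0 (hA.eigenvalues i)) *
        star (hA.eigenvectorUnitary : Matrix d d ℂ)
  else 0

/-! Diagonalize `X = U diag(x) U⋆` and `Y = V diag(y) V⋆`. The unitary `U ⊗ V` diagonalizes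
`X ⊗ 𝟙 + 𝟙 ⊗ Y - 𝟙` with eigenvalues `x i + y j - 1`, so the `q`-th power of the norm in question
is `∑ i j, max 0 (x i + y j - 1) ^ q`. The normalization gives `0 ≤ x i, y j ≤ 1`, hence
`max 0 (x i + y j - 1) ≤ x i * y j` since `(1 - x i) * (1 - y j) ≥ 0`, and the sum is at most
`(∑ i, x i ^ q) * (∑ j, y j ^ q) = 1`. -/

namespace Matrix

open Unitary

section Kronecker

variable {R m n : Type*} [CommRing R] [StarRing R]

theorem IsHermitian.kronecker {A : Matrix m m R} {B : Matrix n n R} (hA : A.IsHermitian)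
    (hB : B.IsHermitian) : (A ⊗ₖ B).IsHermitian := by
  rw [IsHermitian, conjTranspose_kronecker, hA, hB]

variable [Fintype m] [DecidableEq m] [Fintype n] [DecidableEq n]

theorem charpoly_conjStarAlgAut (u : unitary (Matrix n n R)) (A : Matrix n n R) :
    (conjStarAlgAut R _ u A).charpoly = A.charpoly := by
  rw [conjStarAlgAut_apply, charpoly_mul_comm, ← mul_assoc]
  simp

def kroneckerUnitary (u : unitary (Matrix m m R)) (v : unitary (Matrix n n R)) :
    unitary (Matrix (m × n) (m × n) R) :=
  ⟨u ⊗ₖ v, kronecker_mem_unitary u.2 v.2⟩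

theorem conjStarAlgAut_kroneckerUnitary (u : unitary (Matrix m m R))
    (v : unitary (Matrix n n R)) (A : Matrix m m R) (B : Matrix n n R) :
    conjStarAlgAut R (Matrix (m × n) (m × n) R) (kroneckerUnitary u v) (A ⊗ₖ B) =
      conjStarAlgAut R _ u A ⊗ₖ conjStarAlgAut R _ v B := by
  simp only [conjStarAlgAut_apply, kroneckerUnitary, star_eq_conjTranspose]
  rw [conjTranspose_kronecker, mul_kronecker_mul, mul_kronecker_mul]

end Kronecker

namespace IsHermitian

variable {𝕜 m n : Type*} [RCLike 𝕜] [Fintype m] [DecidableEq m] [Fintype n] [DecidableEq n]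

open Polynomial in
theorem sum_comp_eigenvalues_of_charpoly_eq {M : Type*} [AddCommMonoid M] {A : Matrix n n 𝕜}
    (hA : A.IsHermitian) {ι : Type*} [Fintype ι] {d : ι → ℝ}
    (h : A.charpoly = ∏ j, (X - C (d j : 𝕜))) (g : ℝ → M) :
    ∑ i, g (hA.eigenvalues i) = ∑ j, g (d j) := by
  have hroots : Finset.univ.val.map (RCLike.ofReal ∘ hA.eigenvalues) =
      Finset.univ.val.map (RCLike.ofReal ∘ d : ι → 𝕜) := by
    rw [← hA.roots_charpoly_eq_eigenvalues, h, roots_prod _ _ (by simp [Finset.prod_ne_zero_iff,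
      X_sub_C_ne_zero])]
    simp
  have hmap : Finset.univ.val.map hA.eigenvalues = Finset.univ.val.map d := by
    simpa [Multiset.map_map] using congrArg (Multiset.map RCLike.re) hroots
  calc ∑ i, g (hA.eigenvalues i) = ((Finset.univ.val.map hA.eigenvalues).map g).sum := by
        rw [Multiset.map_map]; rfl
    _ = ∑ j, g (d j) := by rw [hmap, Multiset.map_map]; rfl

theorem kronecker_one_add_one_kronecker_sub_one_eq_conjStarAlgAut {A : Matrix m m 𝕜}
    {B : Matrix n n 𝕜} (hA : A.IsHermitian) (hB : B.IsHermitian) :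
    A ⊗ₖ 1 + 1 ⊗ₖ B - 1 =
      conjStarAlgAut 𝕜 (Matrix (m × n) (m × n) 𝕜)
        (kroneckerUnitary hA.eigenvectorUnitary hB.eigenvectorUnitary)
        (diagonal (RCLike.ofReal ∘ fun p => hA.eigenvalues p.1 + hB.eigenvalues p.2 - 1)) := by
  have hD : (diagonal (RCLike.ofReal ∘ fun p => hA.eigenvalues p.1 + hB.eigenvalues p.2 - 1) :
      Matrix (m × n) (m × n) 𝕜) =
        diagonal (RCLike.ofReal ∘ hA.eigenvalues) ⊗ₖ 1 +
          1 ⊗ₖ diagonal (RCLike.ofReal ∘ hB.eigenvalues) - 1 := by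
    rw [← diagonal_one, diagonal_kronecker_diagonal, ← diagonal_one, diagonal_kronecker_diagonal,
      ← diagonal_one, diagonal_add, diagonal_sub]
    congr 1
    ext p
    simp
  rw [hD, map_sub, map_add, map_one, conjStarAlgAut_kroneckerUnitary,
    conjStarAlgAut_kroneckerUnitary, map_one, map_one, ← hA.spectral_theorem,
    ← hB.spectral_theorem]

open Polynomial in
theorem charpoly_kronecker_one_add_one_kronecker_sub_one {A : Matrix m m 𝕜} {B : Matrix n n 𝕜}
    (hA : A.IsHermitian) (hB : B.IsHermitian) :
    (A ⊗ₖ 1 + 1 ⊗ₖ B - 1).charpoly =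
      ∏ p : m × n, (X - C ((hA.eigenvalues p.1 + hB.eigenvalues p.2 - 1 : ℝ) : 𝕜)) := by
  rw [kronecker_one_add_one_kronecker_sub_one_eq_conjStarAlgAut hA hB, charpoly_conjStarAlgAut,
    charpoly_diagonal]
  rfl

theorem traceRpow_posPartMat {A : Matrix n n ℂ} (hA : A.IsHermitian) (q : ℝ) :
    traceRpow q (posPartMat A) = ∑ i, max 0 (hA.eigenvalues i) ^ q := by
  have hP : posPartMat A = cfc (max 0 : ℝ → ℝ) A := by
    rw [posPartMat, dif_pos hA, hA.cfc_eq, IsHermitian.cfc]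
    rfl
  have hPh : (posPartMat A).IsHermitian := hP ▸ cfc_predicate _ A
  rw [traceRpow, dif_pos hPh]
  exact hPh.sum_comp_eigenvalues_of_charpoly_eq (hP ▸ hA.charpoly_cfc_eq _) (· ^ q)

end IsHermitian

theorem PosSemidef.sum_eigenvalues_rpow_eq_one {n : Type*} [Fintype n] [DecidableEq n]
    {A : Matrix n n ℂ} (hA : A.PosSemidef) {q : ℝ} (hq : q ≠ 0) (h : schattenNorm q A = 1) :
    ∑ i, hA.isHermitian.eigenvalues i ^ q = 1 := by
  rw [schattenNorm, traceRpow, dif_pos hA.isHermitian, one_div] at h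
  have hnonneg : 0 ≤ ∑ i, hA.isHermitian.eigenvalues i ^ q :=
    Finset.sum_nonneg fun i _ => Real.rpow_nonneg (hA.eigenvalues_nonneg i) q
  rw [← Real.rpow_inv_rpow hnonneg hq, h, Real.one_rpow]

end Matrix

theorem Real.le_one_of_sum_rpow_eq_one {ι : Type*} [Fintype ι] {q : ℝ} (hq : 0 < q) {v : ι → ℝ}
    (hv : ∀ i, 0 ≤ v i) (h : ∑ i, v i ^ q = 1) (i : ι) : v i ≤ 1 := by
  by_contra! hi
  have : v i ^ q ≤ 1 := h ▸ Finset.single_le_sum (fun j _ => Real.rpow_nonneg (hv j) q)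
    (Finset.mem_univ i)
  exact this.not_gt (Real.one_lt_rpow hi hq)

theorem Real.max_zero_add_sub_one_rpow_le_mul_rpow {q a b : ℝ} (hq : 0 ≤ q) (ha₀ : 0 ≤ a)
    (ha₁ : a ≤ 1) (hb₀ : 0 ≤ b) (hb₁ : b ≤ 1) : max 0 (a + b - 1) ^ q ≤ a ^ q * b ^ q := by
  have hab : a + b - 1 ≤ a * b := by nlinarith [mul_nonneg (sub_nonneg.2 ha₁) (sub_nonneg.2 hb₁)]
  rw [← Real.mul_rpow ha₀ hb₀]
  exact Real.rpow_le_rpow (le_max_left _ _) (max_le (mul_nonneg ha₀ hb₀) hab) hq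

/-- **Corollary (Audenaert).** For `q > 1` and positive semidefinite matrices `X`, `Y` with
`‖X‖_q = ‖Y‖_q = 1`, we have `‖(X ⊗ 𝟙 + 𝟙 ⊗ Y − 𝟙)₊‖_q ≤ 1`. -/
theorem schattenNorm_posPart_le_one {d₁ d₂ : ℕ} (q : ℝ) (hq : 1 < q)
    (X : Matrix (Fin d₁) (Fin d₁) ℂ) (Y : Matrix (Fin d₂) (Fin d₂) ℂ)
    (hX : X.PosSemidef) (hY : Y.PosSemidef)
    (hXnorm : schattenNorm q X = 1) (hYnorm : schattenNorm q Y = 1) :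
    schattenNorm q
      (posPartMat (X ⊗ₖ (1 : Matrix (Fin d₂) (Fin d₂) ℂ)
        + (1 : Matrix (Fin d₁) (Fin d₁) ℂ) ⊗ₖ Y
        - (1 : Matrix (Fin d₁ × Fin d₂) (Fin d₁ × Fin d₂) ℂ))) ≤ 1 := by
  have hq₀ : 0 < q := zero_lt_one.trans hq
  set x := hX.isHermitian.eigenvalues
  set y := hY.isHermitian.eigenvalues
  have hx : ∑ i, x i ^ q = 1 := hX.sum_eigenvalues_rpow_eq_one hq₀.ne' hXnorm
  have hy : ∑ j, y j ^ q = 1 := hY.sum_eigenvalues_rpow_eq_one hq₀.ne' hYnorm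
  have hH := ((hX.isHermitian.kronecker isHermitian_one).add
    (isHermitian_one.kronecker hY.isHermitian)).sub isHermitian_one
  rw [schattenNorm, hH.traceRpow_posPartMat, hH.sum_comp_eigenvalues_of_charpoly_eq
    (hX.isHermitian.charpoly_kronecker_one_add_one_kronecker_sub_one hY.isHermitian)
    (fun t => max 0 t ^ q)]
  refine Real.rpow_le_one (Finset.sum_nonneg fun p _ => by positivity) ?_ (by positivity)
  have hx₁ := Real.le_one_of_sum_rpow_eq_one hq₀ hX.eigenvalues_nonneg hx
  have hy₁ := Real.le_one_of_sum_rpow_eq_one hq₀ hY.eigenvalues_nonneg hy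
  calc ∑ p : Fin d₁ × Fin d₂, max 0 (x p.1 + y p.2 - 1) ^ q
      ≤ ∑ p : Fin d₁ × Fin d₂, x p.1 ^ q * y p.2 ^ q :=
        Finset.sum_le_sum fun p _ => Real.max_zero_add_sub_one_rpow_le_mul_rpow hq₀.le
          (hX.eigenvalues_nonneg _) (hx₁ _) (hY.eigenvalues_nonneg _) (hy₁ _)
    _ = (∑ i, x i ^ q) * ∑ j, y j ^ q := by rw [Finset.sum_mul_sum, Fintype.sum_prod_type]
    _ = 1 := by rw [hx, hy, one_mul]
end

section
/- Let q > 1 be a real number, and let y = (y₁, …, y_n) be a finite vector of nonnegative real numbers with ∑_j y_j^q = 1. Define f(a) := (∑_j ((y_j + a − 1)₊)^q)^{1/q} for real a. Then f is convex on ℝ, f(0) = 0, f(1) = 1, and consequently f(a) ≤ a for all a with 0 ≤ a ≤ 1. -/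
/-- For `q > 1` and a nonnegative vector `y` with `∑ j, y j ^ q = 1`, the function
`f(a) = (∑ j, ((y j + a − 1)₊)^q)^(1/q)` is convex on `ℝ`, satisfies `f 0 = 0` and
`f 1 = 1`, and consequently `f a ≤ a` for all `0 ≤ a ≤ 1`. -/
theorem convexOn_posPart_lq_norm {n : ℕ} (q : ℝ) (hq : 1 < q)
    (y : Fin n → ℝ) (hy : ∀ j, 0 ≤ y j) (hynorm : ∑ j, y j ^ q = 1)
    (f : ℝ → ℝ) (hf : f = fun a => (∑ j, (max 0 (y j + a - 1)) ^ q) ^ (1 / q)) :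
    ConvexOn ℝ Set.univ f ∧ f 0 = 0 ∧ f 1 = 1 ∧
      ∀ a : ℝ, 0 ≤ a → a ≤ 1 → f a ≤ a := by
  have hq0 : (0:ℝ) < q := lt_trans one_pos hq
  have hconv : ConvexOn ℝ Set.univ f := by
    subst hf
    refine ⟨convex_univ, fun a _ b _ s t hs ht hst => ?_⟩
    simp only
    set u := fun j => max 0 (y j + a - 1) with hu_def
    set v := fun j => max 0 (y j + b - 1) with hv_def
    have hu : ∀ j, 0 ≤ u j := fun j => le_max_left _ _
    have hv : ∀ j, 0 ≤ v j := fun j => le_max_left _ _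
    have key : ∀ j, max 0 (y j + (s * a + t * b) - 1) ≤ s * u j + t * v j := by
      intro j
      refine max_le (by positivity) ?_
      have h1 : s * (y j + a - 1) ≤ s * u j :=
        mul_le_mul_of_nonneg_left (le_max_right _ _) hs
      have h2 : t * (y j + b - 1) ≤ t * v j :=
        mul_le_mul_of_nonneg_left (le_max_right _ _) ht
      have heq : y j + (s * a + t * b) - 1 = s * (y j + a - 1) + t * (y j + b - 1) := by
        linear_combination (1 - y j) * hst
      linarith
    have step1 : (∑ j, (max 0 (y j + (s * a + t * b) - 1)) ^ q) ^ (1 / q) ≤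
        (∑ j, (s * u j + t * v j) ^ q) ^ (1 / q) := by
      apply Real.rpow_le_rpow
      · exact Finset.sum_nonneg fun j _ => Real.rpow_nonneg (le_max_left _ _) q
      · exact Finset.sum_le_sum fun j _ =>
          Real.rpow_le_rpow (le_max_left _ _) (key j) hq0.le
      · positivity
    have step2 : (∑ j, (s * u j + t * v j) ^ q) ^ (1 / q) ≤
        (∑ j, (s * u j) ^ q) ^ (1 / q) + (∑ j, (t * v j) ^ q) ^ (1 / q) :=
      Real.Lp_add_le_of_nonneg Finset.univ (hp := hq.le) (hf := fun j _ => by positivity) (hg := fun j _ => by positivity)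
    have scale : ∀ (c : ℝ), 0 ≤ c → ∀ w : Fin n → ℝ, (∀ j, 0 ≤ w j) →
        (∑ j, (c * w j) ^ q) ^ (1 / q) = c * (∑ j, w j ^ q) ^ (1 / q) := by
      intro c hc w hw
      have : ∀ j, (c * w j) ^ q = c ^ q * w j ^ q := fun j =>
        Real.mul_rpow hc (hw j)
      rw [Finset.sum_congr rfl fun j _ => this j, ← Finset.mul_sum,
        Real.mul_rpow (Real.rpow_nonneg hc q)
          (Finset.sum_nonneg fun j _ => Real.rpow_nonneg (hw j) q),
        ← Real.rpow_mul hc, mul_one_div, div_self hq0.ne', Real.rpow_one]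
    calc (∑ j, (max 0 (y j + (s * a + t * b) - 1)) ^ q) ^ (1 / q)
        ≤ (∑ j, (s * u j) ^ q) ^ (1 / q) + (∑ j, (t * v j) ^ q) ^ (1 / q) :=
          le_trans step1 step2
      _ = s * (∑ j, u j ^ q) ^ (1 / q) + t * (∑ j, v j ^ q) ^ (1 / q) := by
          rw [scale s hs u hu, scale t ht v hv]
  have hf0 : f 0 = 0 := by
    subst hf
    simp only
    have hle : ∀ j, y j ≤ 1 := by
      intro j
      by_contra h
      push_neg at h
      have h1 : (1:ℝ) < y j ^ q := by
        rw [show (1:ℝ) = 1 ^ q by rw [Real.one_rpow]]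
        exact Real.rpow_lt_rpow (by norm_num) h hq0
      have h2 : y j ^ q ≤ ∑ i, y i ^ q :=
        Finset.single_le_sum (fun i _ => Real.rpow_nonneg (hy i) q) (Finset.mem_univ j)
      rw [hynorm] at h2
      linarith
    have : ∀ j, max 0 (y j + 0 - 1) = 0 := fun j =>
      max_eq_left (by linarith [hle j])
    simp only [this]
    rw [Real.zero_rpow hq0.ne', Finset.sum_const, smul_zero,
      Real.zero_rpow (by positivity)]
  have hf1 : f 1 = 1 := by
    subst hf
    simp only
    have : ∀ j, max 0 (y j + 1 - 1) = y j := fun j => by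
      rw [add_sub_cancel_right]; exact max_eq_right (hy j)
    simp only [this, hynorm, Real.one_rpow]
  refine ⟨hconv, hf0, hf1, fun a ha ha1 => ?_⟩
  have := hconv.2 (Set.mem_univ (1:ℝ)) (Set.mem_univ (0:ℝ)) ha (by linarith : (0:ℝ) ≤ 1 - a)
    (by ring)
  simpa [hf0, hf1] using this
end

section
/- Let q > 1 be a real number. For any bipartite quantum state ρ (a positive semidefinite matrix with trace 1) on a finite-dimensional bipartite Hilbert space ℂ^{d₁} ⊗ ℂ^{d₂} (i.e., a positive semidefinite matrix indexed by (Fin d₁ × Fin d₂) with trace 1), the inequality 1 + Tr[ρ^q] ≥ Tr[(Tr₁ρ)^q] + Tr[(Tr₂ρ)^q] holds. -/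
open Matrix ComplexOrder

/-! Diagonalize the marginals, `Tr₂ρ = U₁ diag(a) U₁ᴴ` and `Tr₁ρ = U₂ diag(b) U₂ᴴ`, and let `m` be
the diagonal of `(U₁ ⊗ U₂)ᴴ ρ (U₁ ⊗ U₂)`. Conjugation by a product unitary commutes with the partial
traces, so `m` is a probability distribution on pairs with marginals `a` and `b`. Subadditivity of
the classical Tsallis entropy gives `∑ aᵢ^q + ∑ bⱼ^q ≤ 1 + ∑ mᵢⱼ^q`, and `∑ mᵢⱼ^q ≤ Tr ρ^q` because
the diagonal of a unitary conjugate of `ρ` is the image of its spectrum under a doubly stochastic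
matrix (the squared moduli of a unitary) and `x ↦ x^q` is convex. -/

open Finset Kronecker

theorem Real.rpow_sum_le_sum_rpow_one_sub_mul_rpow {κ : Type*} [Fintype κ] {q : ℝ} (hq : 1 ≤ q)
    {w x : κ → ℝ} (hw : ∀ j, 0 ≤ w j) (hw1 : ∑ j, w j = 1) (hx : ∀ j, 0 ≤ x j)
    (hxw : ∀ j, w j = 0 → x j = 0) :
    (∑ j, x j) ^ q ≤ ∑ j, w j ^ (1 - q) * x j ^ q := by
  have hterm : ∀ j, w j * (x j / w j) ^ q = w j ^ (1 - q) * x j ^ q := fun j => by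
    rcases (hw j).eq_or_lt with h | h
    · simp [← h, hxw j h.symm, Real.zero_rpow (by linarith : q ≠ 0)]
    · rw [Real.div_rpow (hx j) h.le, Real.rpow_sub h, Real.rpow_one]
      field_simp
  calc (∑ j, x j) ^ q = (∑ j, w j * (x j / w j)) ^ q := by
        simp only [mul_div_cancel_of_imp' (hxw _)]
    _ ≤ ∑ j, w j * (x j / w j) ^ q := Real.rpow_arith_mean_le_arith_mean_rpow univ w _
        (fun j _ => hw j) hw1 (fun j _ => div_nonneg (hx j) (hw j)) hq
    _ = ∑ j, w j ^ (1 - q) * x j ^ q := sum_congr rfl fun j _ => hterm j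

theorem Real.sum_rpow_le_rpow_sum {ι : Type*} [Fintype ι] {q : ℝ} (hq : 1 ≤ q)
    {x : ι → ℝ} (hx : ∀ i, 0 ≤ x i) : ∑ i, x i ^ q ≤ (∑ i, x i) ^ q := by
  have hle : ∀ i, x i ^ q ≤ x i * (∑ i, x i) ^ (q - 1) := fun i => calc
    x i ^ q = x i * x i ^ (q - 1) := by
      rw [← Real.rpow_one_add' (hx i) (by linarith)]; ring_nf
    _ ≤ x i * (∑ i, x i) ^ (q - 1) := by
      have := single_le_sum (fun i _ => hx i) (mem_univ i)
      have := hx i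
      gcongr
  calc ∑ i, x i ^ q ≤ ∑ i, x i * (∑ i, x i) ^ (q - 1) := sum_le_sum fun i _ => hle i
    _ = (∑ i, x i) ^ q := by
      rw [← sum_mul, ← Real.rpow_one_add' (sum_nonneg fun i _ => hx i) (by linarith)]
      ring_nf

theorem Real.rpow_one_sub_mul_add_rpow_le {q b t : ℝ} (hq : 1 ≤ q) (hb : 0 ≤ b) (hb1 : b ≤ 1)
    (ht : 0 ≤ t) (htb : t ≤ b ^ q) : b ^ (1 - q) * t + b ^ q ≤ b + t := by
  rcases hb.eq_or_lt with rfl | hb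
  · have : t = 0 := le_antisymm (htb.trans_eq (Real.zero_rpow (by linarith))) ht
    simp [this, Real.zero_rpow (by linarith : q ≠ 0)]
  · -- the difference of the two sides is `(b ^ (1 - q) - 1) * (t - b ^ q)`
    have h1 : 1 ≤ b ^ (1 - q) := Real.one_le_rpow_of_pos_of_le_one_of_nonpos hb hb1 (by linarith)
    have h2 : b ^ (1 - q) * b ^ q = b := by rw [← Real.rpow_add hb]; norm_num
    nlinarith [mul_le_mul_of_nonneg_left htb (sub_nonneg.2 h1)]

theorem sum_rpow_sum_add_sum_rpow_sum_le {ι κ : Type*} [Fintype ι] [Fintype κ] {q : ℝ}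
    (hq : 1 ≤ q) {m : ι → κ → ℝ} (hm : ∀ i j, 0 ≤ m i j) (hm1 : ∑ i, ∑ j, m i j = 1) :
    ∑ i, (∑ j, m i j) ^ q + ∑ j, (∑ i, m i j) ^ q ≤ 1 + ∑ i, ∑ j, m i j ^ q := by
  set b : κ → ℝ := fun j => ∑ i, m i j
  have hb : ∀ j, 0 ≤ b j := fun j => sum_nonneg fun i _ => hm i j
  have hb_sum : ∑ j, b j = 1 := by rw [← hm1, sum_comm]
  have hb_one : ∀ j, b j ≤ 1 := fun j => hb_sum ▸ single_le_sum (fun j _ => hb j) (mem_univ j)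
  have hm_le : ∀ i j, m i j ≤ b j := fun i j => single_le_sum (fun i _ => hm i j) (mem_univ i)
  have hrow : ∀ i, (∑ j, m i j) ^ q ≤ ∑ j, b j ^ (1 - q) * m i j ^ q := fun i =>
    Real.rpow_sum_le_sum_rpow_one_sub_mul_rpow hq hb hb_sum (hm i)
      fun j hj => le_antisymm (hj ▸ hm_le i j) (hm i j)
  have hcol : ∀ j, ∑ i, m i j ^ q ≤ b j ^ q := fun j =>
    Real.sum_rpow_le_rpow_sum hq fun i => hm i j
  calc ∑ i, (∑ j, m i j) ^ q + ∑ j, b j ^ q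
      ≤ ∑ i, ∑ j, b j ^ (1 - q) * m i j ^ q + ∑ j, b j ^ q := by gcongr with i; exact hrow i
    _ = ∑ j, (b j ^ (1 - q) * ∑ i, m i j ^ q + b j ^ q) := by
      simp only [sum_add_distrib, mul_sum]; rw [sum_comm]
    _ ≤ ∑ j, (b j + ∑ i, m i j ^ q) := sum_le_sum fun j _ =>
      Real.rpow_one_sub_mul_add_rpow_le hq (hb j) (hb_one j)
        (sum_nonneg fun i _ => Real.rpow_nonneg (hm i j) q) (hcol j)
    _ = 1 + ∑ i, ∑ j, m i j ^ q := by rw [sum_add_distrib, hb_sum, sum_comm]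

theorem ConvexOn.sum_map_vecMul_le {n : Type*} [Fintype n] [DecidableEq n] {s : Set ℝ}
    {f : ℝ → ℝ} (hf : ConvexOn ℝ s f) {P : Matrix n n ℝ} (hP : P ∈ doublyStochastic ℝ n)
    {r : n → ℝ} (hr : ∀ k, r k ∈ s) : ∑ c, f ((r ᵥ* P) c) ≤ ∑ k, f (r k) := by
  obtain ⟨hP0, hProw, hPcol⟩ := mem_doublyStochastic_iff_sum.1 hP
  calc ∑ c, f ((r ᵥ* P) c) ≤ ∑ c, ∑ k, P k c * f (r k) := sum_le_sum fun c _ => by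
        simpa [vecMul, dotProduct, mul_comm] using
          hf.map_sum_le (fun k _ => hP0 k c) (hPcol c) (fun k _ => hr k)
    _ = ∑ k, f (r k) := by
        rw [sum_comm]
        simp only [← sum_mul, hProw, one_mul]

theorem Matrix.map_normSq_mem_doublyStochastic {n : Type*} [Fintype n] [DecidableEq n]
    {U : Matrix n n ℂ} (hU : U ∈ unitaryGroup n ℂ) :
    U.map Complex.normSq ∈ doublyStochastic ℝ n := by
  have hrow := congrFun₂ (mem_unitaryGroup_iff.1 hU)
  have hcol := congrFun₂ (mem_unitaryGroup_iff'.1 hU)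
  refine mem_doublyStochastic_iff_sum.2
    ⟨fun i j => Complex.normSq_nonneg _, fun i => ?_, fun j => ?_⟩
  · have : (∑ j, Complex.normSq (U i j) : ℂ) = 1 := by
      simpa [mul_apply, Complex.mul_conj] using hrow i i
    exact_mod_cast this
  · have : (∑ i, Complex.normSq (U i j) : ℂ) = 1 := by
      simpa [mul_apply, Complex.conj_mul', Complex.normSq_eq_norm_sq] using hcol j j
    exact_mod_cast this

theorem Matrix.IsHermitian.re_diag_conjTranspose_mul_mul_eq_vecMul {n : Type*} [Fintype n]
    [DecidableEq n] {A : Matrix n n ℂ} (hA : A.IsHermitian) (U : Matrix n n ℂ) :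
    (fun c => ((Uᴴ * A * U) c c).re) =
      hA.eigenvalues ᵥ* (star (hA.eigenvectorUnitary : Matrix n n ℂ) * U).map Complex.normSq := by
  set Z := star (hA.eigenvectorUnitary : Matrix n n ℂ) * U
  have hconj : Uᴴ * A * U = Zᴴ * diagonal (RCLike.ofReal ∘ hA.eigenvalues) * Z := by
    conv_lhs => rw [hA.spectral_theorem, Unitary.conjStarAlgAut_apply]
    simp only [Z, ← star_eq_conjTranspose, star_mul, star_star, Matrix.mul_assoc]
  ext c
  rw [hconj, mul_apply, Complex.re_sum]
  refine sum_congr rfl fun k _ => ?_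
  rw [mul_diagonal, conjTranspose_apply, mul_right_comm, RCLike.star_def,
    ← Complex.normSq_eq_conj_mul_self]
  simp [mul_comm]

theorem Matrix.IsHermitian.sum_map_re_diag_conjTranspose_mul_mul_le {n : Type*} [Fintype n]
    [DecidableEq n] {A : Matrix n n ℂ} (hA : A.IsHermitian) {U : Matrix n n ℂ}
    (hU : U ∈ unitaryGroup n ℂ) {s : Set ℝ} {f : ℝ → ℝ} (hf : ConvexOn ℝ s f)
    (hs : ∀ k, hA.eigenvalues k ∈ s) :
    ∑ c, f ((Uᴴ * A * U) c c).re ≤ ∑ k, f (hA.eigenvalues k) := by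
  simp only [congrFun (hA.re_diag_conjTranspose_mul_mul_eq_vecMul U)]
  exact hf.sum_map_vecMul_le
    (map_normSq_mem_doublyStochastic (mul_mem (Unitary.star_mem hA.eigenvectorUnitary.2) hU)) hs

theorem Matrix.IsHermitian.eigenvalues_eq_re_diag {n : Type*} [Fintype n] [DecidableEq n]
    {A : Matrix n n ℂ} (hA : A.IsHermitian) (i : n) :
    hA.eigenvalues i =
      (((hA.eigenvectorUnitary : Matrix n n ℂ)ᴴ * A * hA.eigenvectorUnitary) i i).re := by
  have := hA.conjStarAlgAut_star_eigenvectorUnitary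
  rw [Unitary.conjStarAlgAut_star_apply, star_eq_conjTranspose] at this
  simp [this]

section PartialTrace

variable {d₁ d₂ : ℕ}

theorem trace_ptrace2 (ρ : Matrix (Fin d₁ × Fin d₂) (Fin d₁ × Fin d₂) ℂ) :
    (ptrace2 ρ).trace = ρ.trace := by
  simp [trace, ptrace2, Fintype.sum_prod_type]

theorem ptrace2_isHermitian {ρ : Matrix (Fin d₁ × Fin d₂) (Fin d₁ × Fin d₂) ℂ}
    (hρ : ρ.IsHermitian) : (ptrace2 ρ).IsHermitian := by
  ext i i'
  simp only [conjTranspose_apply, ptrace2, of_apply, star_sum]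
  exact sum_congr rfl fun j _ => hρ.apply _ _

theorem ptrace1_isHermitian {ρ : Matrix (Fin d₁ × Fin d₂) (Fin d₁ × Fin d₂) ℂ}
    (hρ : ρ.IsHermitian) : (ptrace1 ρ).IsHermitian := by
  ext j j'
  simp only [conjTranspose_apply, ptrace1, of_apply, star_sum]
  exact sum_congr rfl fun i _ => hρ.apply _ _

theorem ptrace2_kronecker_conj (ρ : Matrix (Fin d₁ × Fin d₂) (Fin d₁ × Fin d₂) ℂ)
    (X : Matrix (Fin d₁) (Fin d₁) ℂ) {Y : Matrix (Fin d₂) (Fin d₂) ℂ} (hY : Y * Yᴴ = 1) :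
    ptrace2 ((X ⊗ₖ Y)ᴴ * ρ * (X ⊗ₖ Y)) = Xᴴ * ptrace2 ρ * X := by
  have hYY : ∀ l l', ∑ j, star (Y l j) * Y l' j = if l' = l then 1 else 0 := fun l l' => by
    simpa [mul_apply, one_apply, mul_comm] using congrFun₂ hY l' l
  ext i i'
  simp only [ptrace2, of_apply, mul_apply, conjTranspose_apply, kroneckerMap_apply, star_mul',
    sum_mul, mul_sum]
  calc _ = ∑ c, ∑ c', star (X c.1 i) * ρ c c' * X c'.1 i' * ∑ j, star (Y c.2 j) * Y c'.2 j := by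
        simp only [mul_sum]
        conv_rhs => rw [sum_comm]
        rw [sum_comm]
        refine sum_congr rfl fun c' _ => ?_
        rw [sum_comm]
        refine sum_congr rfl fun c _ => sum_congr rfl fun j _ => ?_
        ring
    _ = ∑ c, ∑ k', star (X c.1 i) * ρ c (k', c.2) * X k' i' := by
        simp only [hYY]
        simp [Fintype.sum_prod_type]
    _ = _ := by
        rw [sum_comm]
        simp [Fintype.sum_prod_type]

theorem ptrace1_kronecker_conj (ρ : Matrix (Fin d₁ × Fin d₂) (Fin d₁ × Fin d₂) ℂ)
    {X : Matrix (Fin d₁) (Fin d₁) ℂ} (hX : X * Xᴴ = 1) (Y : Matrix (Fin d₂) (Fin d₂) ℂ) :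
    ptrace1 ((X ⊗ₖ Y)ᴴ * ρ * (X ⊗ₖ Y)) = Yᴴ * ptrace1 ρ * Y := by
  have hXX : ∀ k k', ∑ i, star (X k i) * X k' i = if k' = k then 1 else 0 := fun k k' => by
    simpa [mul_apply, one_apply, mul_comm] using congrFun₂ hX k' k
  ext j j'
  simp only [ptrace1, of_apply, mul_apply, conjTranspose_apply, kroneckerMap_apply, star_mul',
    sum_mul, mul_sum]
  calc _ = ∑ c, ∑ c', star (Y c.2 j) * ρ c c' * Y c'.2 j' * ∑ i, star (X c.1 i) * X c'.1 i := by
        simp only [mul_sum]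
        conv_rhs => rw [sum_comm]
        rw [sum_comm]
        refine sum_congr rfl fun c' _ => ?_
        rw [sum_comm]
        refine sum_congr rfl fun c _ => sum_congr rfl fun i _ => ?_
        ring
    _ = ∑ c, ∑ l', star (Y c.2 j) * ρ c (c.1, l') * Y l' j' := by
        simp only [hXX]
        simp [Fintype.sum_prod_type]
    _ = _ := by
        rw [sum_comm]
        simp only [Fintype.sum_prod_type]
        exact sum_congr rfl fun _ _ => sum_comm

theorem sum_re_diag_kronecker_conj_eq_re_diag_ptrace2
    (ρ : Matrix (Fin d₁ × Fin d₂) (Fin d₁ × Fin d₂) ℂ) (X : Matrix (Fin d₁) (Fin d₁) ℂ)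
    {Y : Matrix (Fin d₂) (Fin d₂) ℂ} (hY : Y * Yᴴ = 1) (i : Fin d₁) :
    ∑ j, (((X ⊗ₖ Y)ᴴ * ρ * (X ⊗ₖ Y)) (i, j) (i, j)).re = ((Xᴴ * ptrace2 ρ * X) i i).re := by
  rw [← ptrace2_kronecker_conj ρ X hY, ptrace2, of_apply, Complex.re_sum]

theorem sum_re_diag_kronecker_conj_eq_re_diag_ptrace1
    (ρ : Matrix (Fin d₁ × Fin d₂) (Fin d₁ × Fin d₂) ℂ) {X : Matrix (Fin d₁) (Fin d₁) ℂ}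
    (hX : X * Xᴴ = 1) (Y : Matrix (Fin d₂) (Fin d₂) ℂ) (j : Fin d₂) :
    ∑ i, (((X ⊗ₖ Y)ᴴ * ρ * (X ⊗ₖ Y)) (i, j) (i, j)).re = ((Yᴴ * ptrace1 ρ * Y) j j).re := by
  rw [← ptrace1_kronecker_conj ρ hX Y, ptrace1, of_apply, Complex.re_sum]

end PartialTrace

/-- For `q > 1` and any bipartite state `ρ` on `ℂ^{d₁} ⊗ ℂ^{d₂}`,
`1 + Tr[ρ^q] ≥ Tr[(Tr₁ρ)^q] + Tr[(Tr₂ρ)^q]`. -/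
theorem traceRpow_partial_traces_le {d₁ d₂ : ℕ} (q : ℝ) (hq : 1 < q)
    (ρ : Matrix (Fin d₁ × Fin d₂) (Fin d₁ × Fin d₂) ℂ)
    (hρ : ρ.PosSemidef) (htr : ρ.trace = 1) :
    traceRpow q (ptrace1 ρ) + traceRpow q (ptrace2 ρ) ≤ 1 + traceRpow q ρ := by
  have hA := ptrace2_isHermitian hρ.1
  have hB := ptrace1_isHermitian hρ.1
  set U₁ : Matrix (Fin d₁) (Fin d₁) ℂ := ↑hA.eigenvectorUnitary
  set U₂ : Matrix (Fin d₂) (Fin d₂) ℂ := ↑hB.eigenvectorUnitary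
  set m : Fin d₁ → Fin d₂ → ℝ := fun i j => (((U₁ ⊗ₖ U₂)ᴴ * ρ * (U₁ ⊗ₖ U₂)) (i, j) (i, j)).re
  have hrow : ∀ i, ∑ j, m i j = hA.eigenvalues i := fun i => by
    rw [hA.eigenvalues_eq_re_diag, ← sum_re_diag_kronecker_conj_eq_re_diag_ptrace2 ρ U₁
      (mem_unitaryGroup_iff.1 hB.eigenvectorUnitary.2)]
  have hcol : ∀ j, ∑ i, m i j = hB.eigenvalues j := fun j => by
    rw [hB.eigenvalues_eq_re_diag, ← sum_re_diag_kronecker_conj_eq_re_diag_ptrace1 ρ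
      (mem_unitaryGroup_iff.1 hA.eigenvectorUnitary.2) U₂]
  have hm : ∀ i j, 0 ≤ m i j := fun i j =>
    (Complex.nonneg_iff.1 (hρ.conjTranspose_mul_mul_same (U₁ ⊗ₖ U₂)).diag_nonneg).1
  have hm_sum : ∑ i, ∑ j, m i j = 1 := by
    have htrace := hA.trace_eq_sum_eigenvalues
    rw [trace_ptrace2, htr] at htrace
    simpa [hrow] using congrArg Complex.re htrace.symm
  have hdiag : ∑ i, ∑ j, m i j ^ q ≤ traceRpow q ρ := by
    rw [traceRpow, dif_pos hρ.1, ← Fintype.sum_prod_type']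
    exact hρ.1.sum_map_re_diag_conjTranspose_mul_mul_le
      (kronecker_mem_unitary hA.eigenvectorUnitary.2 hB.eigenvectorUnitary.2)
      (convexOn_rpow hq.le) hρ.eigenvalues_nonneg
  rw [traceRpow, traceRpow, dif_pos hA, dif_pos hB]
  simp only [← hrow, ← hcol]
  linarith [sum_rpow_sum_add_sum_rpow_sum_le hq.le hm hm_sum]
end
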